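/- Given an interval total t-coloring φ of the hypercube Q_n, the edge coloring ψ of Q_{n+1} defined by coloring each edge within either copy Q_{n+1}^{(i)} (i ∈ {0,1}) of Q_n by φ's color of the corresponding edge, and coloring the edge between (0,ᾱ) and (1,ᾱ) by φ(ᾱ), is an interval edge t-coloring of Q_{n+1}. -/

import Mathlib

/-!
Write a vertex of `Q_{n+1}` as `(i, x)` with `i` its first coordinate. An edge at `(i, x)` either
stays in the layer `i`, where it gets the color of an edge of `Q_n` at `x`, or goes to `(1 - i, x)`
and gets the color of `x`. So the edge palette of `(i, x)` in `Q_{n+1}` is the total palette of `x`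
in `Q_n`, an interval of `n + 1 = deg (i, x)` colors, and the colors used by `ψ` are exactly those
used by `φ`.
-/

namespace ITC

variable {V : Type*}

/-- A total coloring: proper on vertices, edges, and incident vertex-edge pairs. -/
def IsTotalColoring (G : SimpleGraph V) (cv : V → ℕ) (ce : Sym2 V → ℕ) : Prop :=
  (∀ u v, G.Adj u v → cv u ≠ cv v) ∧
  (∀ e f, e ∈ G.edgeSet → f ∈ G.edgeSet → e ≠ f → (∃ w, w ∈ e ∧ w ∈ f) → ce e ≠ ce f) ∧
  (∀ v e, e ∈ G.edgeSet → v ∈ e → cv v ≠ ce e)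

/-- The set of colors on a vertex `v` together with its incident edges. -/
def palette (G : SimpleGraph V) (cv : V → ℕ) (ce : Sym2 V → ℕ) (v : V) : Set ℕ :=
  insert (cv v) {c | ∃ e ∈ G.edgeSet, v ∈ e ∧ ce e = c}

/-- Degree of a vertex. -/
noncomputable def deg (G : SimpleGraph V) (v : V) : ℕ := (G.neighborSet v).ncard

/-- An interval total `t`-coloring. -/
def IsIntervalTotalColoring (G : SimpleGraph V) (t : ℕ) (cv : V → ℕ)
    (ce : Sym2 V → ℕ) : Prop :=
  IsTotalColoring G cv ce ∧
  (∀ v, cv v ∈ Set.Icc 1 t) ∧ (∀ e ∈ G.edgeSet, ce e ∈ Set.Icc 1 t) ∧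
  (∀ c ∈ Set.Icc 1 t, (∃ v, cv v = c) ∨ (∃ e ∈ G.edgeSet, ce e = c)) ∧
  (∀ v, ∃ a, palette G cv ce v = Set.Icc a (a + deg G v))

def HasIntervalTotalColoring (G : SimpleGraph V) (t : ℕ) : Prop :=
  ∃ cv ce, IsIntervalTotalColoring G t cv ce

/-- Minimum span of interval total colorings. -/
noncomputable def wtau (G : SimpleGraph V) : ℕ := sInf {t | HasIntervalTotalColoring G t}

/-- Maximum span of interval total colorings. -/
noncomputable def Wtau (G : SimpleGraph V) : ℕ := sSup {t | HasIntervalTotalColoring G t}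

/-- Total chromatic number: least `k` such that there is a total coloring
with colors in `{1, …, k}`. -/
noncomputable def totalChromaticNumber (G : SimpleGraph V) : ℕ :=
  sInf {k | ∃ cv ce, IsTotalColoring G cv ce ∧ (∀ v, cv v ∈ Set.Icc 1 k) ∧
    ∀ e ∈ G.edgeSet, ce e ∈ Set.Icc 1 k}

/-- A proper edge coloring. -/
def IsProperEdgeColoring (G : SimpleGraph V) (ce : Sym2 V → ℕ) : Prop :=
  ∀ e f, e ∈ G.edgeSet → f ∈ G.edgeSet → e ≠ f → (∃ w, w ∈ e ∧ w ∈ f) → ce e ≠ ce f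

/-- Colors appearing on the edges incident to `v`. -/
def edgePalette (G : SimpleGraph V) (ce : Sym2 V → ℕ) (v : V) : Set ℕ :=
  {c | ∃ e ∈ G.edgeSet, v ∈ e ∧ ce e = c}

/-- An interval (edge) `t`-coloring. -/
def IsIntervalEdgeColoring (G : SimpleGraph V) (t : ℕ) (ce : Sym2 V → ℕ) : Prop :=
  IsProperEdgeColoring G ce ∧
  (∀ e ∈ G.edgeSet, ce e ∈ Set.Icc 1 t) ∧
  (∀ c ∈ Set.Icc 1 t, ∃ e ∈ G.edgeSet, ce e = c) ∧
  (∀ v, ∃ a, edgePalette G ce v = Set.Icc (a + 1) (a + deg G v))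

/-- The hypercube `Q_n`. -/
def hypercube (n : ℕ) : SimpleGraph (Fin n → Bool) where
  Adj u v := ∃! i, u i ≠ v i
  symm := by
    constructor
    rintro u v ⟨i, hi, hu⟩
    exact ⟨i, Ne.symm hi, fun j hj => hu j (Ne.symm hj)⟩
  loopless := by
    constructor
    rintro u ⟨i, hi, -⟩
    exact hi rfl

/-- The complete graph on `Fin (2*r)` minus the perfect matching joining `i` and `i+r`. -/
def Kminus (r : ℕ) : SimpleGraph (Fin (2 * r)) where
  Adj i j := i ≠ j ∧ ¬((i : ℕ) + r = (j : ℕ) ∨ (j : ℕ) + r = (i : ℕ))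
  symm := by
    constructor
    rintro i j ⟨h1, h2⟩
    exact ⟨h1.symm, fun h => h2 h.symm⟩
  loopless := by
    constructor
    rintro i ⟨h1, -⟩
    exact h1 rfl

/-- Blow up each vertex of `H` into a copy of `β` (no edges inside copies). -/
def blowup {α : Type*} (H : SimpleGraph α) (β : Type*) : SimpleGraph (α × β) where
  Adj u v := H.Adj u.1 v.1
  symm := ⟨fun _ _ h => h.symm⟩
  loopless := ⟨fun u h => H.irrefl h⟩

theorem _root_.Fin.existsUnique_iff_zero_or_succ {n : ℕ} {p : Fin (n + 1) → Prop} :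
    (∃! i, p i) ↔
      (p 0 ∧ ∀ j : Fin n, ¬p j.succ) ∨ (¬p 0 ∧ ∃! j : Fin n, p j.succ) := by
  constructor
  · rintro ⟨i, hi, huniq⟩
    induction i using Fin.cases with
    | zero => exact Or.inl ⟨hi, fun j hj => Fin.succ_ne_zero j (huniq _ hj)⟩
    | succ k =>
      exact Or.inr ⟨fun h0 => Fin.succ_ne_zero k (huniq 0 h0).symm,
        k, hi, fun j hj => Fin.succ_injective _ (huniq _ hj)⟩
  · rintro (⟨h0, hsucc⟩ | ⟨h0, k, hk, huniq⟩)
    · refine ⟨0, h0, fun i hi => ?_⟩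
      induction i using Fin.cases with
      | zero => rfl
      | succ j => exact absurd hi (hsucc j)
    · refine ⟨k.succ, hk, fun i hi => ?_⟩
      induction i using Fin.cases with
      | zero => exact absurd hi h0
      | succ j => rw [huniq j hi]

theorem _root_.Fin.eq_of_zero_eq_of_tail_eq {n : ℕ} {α : Type*} {u v : Fin (n + 1) → α}
    (h0 : u 0 = v 0) (ht : Fin.tail u = Fin.tail v) : u = v := by
  rw [← Fin.cons_self_tail u, ← Fin.cons_self_tail v, h0, ht]

open SimpleGraph Set

section Palettes

variable (G : SimpleGraph V)

theorem palette_eq_insert_edgePalette (cv : V → ℕ) (ce : Sym2 V → ℕ) (v : V) :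
    palette G cv ce v = insert (cv v) (edgePalette G ce v) :=
  rfl

theorem iUnion_edgePalette (ce : Sym2 V → ℕ) : ⋃ v, edgePalette G ce v = ce '' G.edgeSet := by
  ext c
  simp only [edgePalette, mem_iUnion, mem_ofPred_eq, mem_image]
  constructor
  · rintro ⟨v, e, he, -, rfl⟩
    exact ⟨e, he, rfl⟩
  · rintro ⟨e, he, rfl⟩
    exact ⟨e.out.1, e, he, e.out_fst_mem, rfl⟩

theorem iUnion_palette (cv : V → ℕ) (ce : Sym2 V → ℕ) :
    ⋃ v, palette G cv ce v = range cv ∪ ce '' G.edgeSet := by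
  simp only [palette_eq_insert_edgePalette, insert_eq, iUnion_union_distrib,
    iUnion_singleton_eq_range, iUnion_edgePalette]

end Palettes

section Hypercube

variable {n : ℕ}

theorem hypercube_adj_cons_cons {a b : Bool} {x y : Fin n → Bool} :
    (hypercube (n + 1)).Adj (Fin.cons a x) (Fin.cons b y) ↔
      (a = b ∧ (hypercube n).Adj x y) ∨ (a ≠ b ∧ x = y) := by
  change (∃! i, _) ↔ _
  simp only [Fin.existsUnique_iff_zero_or_succ, Fin.cons_zero, Fin.cons_succ, not_not,
    ← funext_iff]
  exact or_comm

theorem hypercube_succ_adj_iff {u v : Fin (n + 1) → Bool} :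
    (hypercube (n + 1)).Adj u v ↔
      (u 0 = v 0 ∧ (hypercube n).Adj (Fin.tail u) (Fin.tail v)) ∨
        (u 0 ≠ v 0 ∧ Fin.tail u = Fin.tail v) := by
  simpa only [Fin.cons_self_tail] using
    hypercube_adj_cons_cons (a := u 0) (b := v 0) (x := Fin.tail u) (y := Fin.tail v)

theorem hypercube_neighborSet (v : Fin n → Bool) :
    (hypercube n).neighborSet v = range fun i => Function.update v i (!v i) := by
  ext u
  constructor
  · rintro ⟨i, hi, huniq⟩
    refine ⟨i, funext fun j => ?_⟩
    beta_reduce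
    rcases eq_or_ne j i with rfl | hj
    · rw [Function.update_self]
      exact (Bool.eq_not.2 hi.symm).symm
    · rw [Function.update_of_ne hj]
      exact not_not.1 (mt (huniq j) hj)
  · rintro ⟨i, rfl⟩
    refine ⟨i, by simp, fun j hj => ?_⟩
    by_contra hne
    exact hj (Function.update_of_ne hne _ _).symm

theorem deg_hypercube (v : Fin n → Bool) : deg (hypercube n) v = n := by
  have hinj : Function.Injective fun i => Function.update v i (!v i) := by
    intro i j hij
    by_contra hne
    simpa [Function.update_of_ne hne] using congrFun hij i
  rw [deg, hypercube_neighborSet, ncard_range_of_injective hinj, Nat.card_eq_fintype_card,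
    Fintype.card_fin]

end Hypercube

section Lift

variable {n : ℕ}

def IsLayerLift (cv : (Fin n → Bool) → ℕ) (ce : Sym2 (Fin n → Bool) → ℕ)
    (ψ : Sym2 (Fin (n + 1) → Bool) → ℕ) : Prop :=
  (∀ u v : Fin (n + 1) → Bool, (hypercube (n + 1)).Adj u v → u 0 = v 0 →
    ψ s(u, v) = ce s(Fin.tail u, Fin.tail v)) ∧
  (∀ u v : Fin (n + 1) → Bool, (hypercube (n + 1)).Adj u v → u 0 ≠ v 0 →
    ψ s(u, v) = cv (Fin.tail u))

variable {cv : (Fin n → Bool) → ℕ} {ce : Sym2 (Fin n → Bool) → ℕ}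
  {ψ : Sym2 (Fin (n + 1) → Bool) → ℕ}

theorem IsLayerLift.isProperEdgeColoring (hψ : IsLayerLift cv ce ψ)
    (hφ : IsTotalColoring (hypercube n) cv ce) :
    IsProperEdgeColoring (hypercube (n + 1)) ψ := by
  obtain ⟨hψ₁, hψ₂⟩ := hψ
  obtain ⟨-, hce, hcve⟩ := hφ
  rintro e f he hf hef ⟨w, hwe, hwf⟩
  obtain ⟨x, rfl⟩ := Sym2.mem_iff_exists.1 hwe
  obtain ⟨y, rfl⟩ := Sym2.mem_iff_exists.1 hwf
  rw [mem_edgeSet] at he hf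
  have hxy : x ≠ y := by rintro rfl; exact hef rfl
  rcases hypercube_succ_adj_iff.1 he with ⟨hx0, hx⟩ | ⟨hx0, hx⟩ <;>
    rcases hypercube_succ_adj_iff.1 hf with ⟨hy0, hy⟩ | ⟨hy0, hy⟩
  · rw [hψ₁ w x he hx0, hψ₁ w y hf hy0]
    refine hce _ _ hx hy (fun h => hxy ?_) ⟨_, Sym2.mem_mk_left _ _, Sym2.mem_mk_left _ _⟩
    exact Fin.eq_of_zero_eq_of_tail_eq (hx0.symm.trans hy0) (Sym2.congr_right.1 h)
  · rw [hψ₁ w x he hx0, hψ₂ w y hf hy0]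
    exact (hcve _ _ hx (Sym2.mem_mk_left _ _)).symm
  · rw [hψ₂ w x he hx0, hψ₁ w y hf hy0]
    exact hcve _ _ hy (Sym2.mem_mk_left _ _)
  · -- `x` and `y` would both be the neighbour of `w` across the layers
    refine absurd (Fin.eq_of_zero_eq_of_tail_eq ?_ (hx.symm.trans hy)) hxy
    exact (Bool.eq_not.2 hx0.symm).trans (Bool.eq_not.2 hy0.symm).symm

theorem IsLayerLift.edgePalette_eq (hψ : IsLayerLift cv ce ψ) (v : Fin (n + 1) → Bool) :
    edgePalette (hypercube (n + 1)) ψ v = palette (hypercube n) cv ce (Fin.tail v) := by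
  obtain ⟨hψ₁, hψ₂⟩ := hψ
  ext c
  constructor
  · rintro ⟨e, he, hve, rfl⟩
    obtain ⟨x, rfl⟩ := Sym2.mem_iff_exists.1 hve
    rw [mem_edgeSet] at he
    rcases hypercube_succ_adj_iff.1 he with ⟨h0, ht⟩ | ⟨h0, -⟩
    · rw [hψ₁ v x he h0]
      exact Or.inr ⟨_, ht, Sym2.mem_mk_left _ _, rfl⟩
    · rw [hψ₂ v x he h0]
      exact Or.inl rfl
  · rintro (rfl | ⟨e, he, hve, rfl⟩)
    · have hadj :
          (hypercube (n + 1)).Adj v (Fin.cons (α := fun _ => Bool) (!v 0) (Fin.tail v)) :=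
        hypercube_succ_adj_iff.2 (Or.inr ⟨by simp, by rw [Fin.tail_cons]⟩)
      exact ⟨_, hadj, Sym2.mem_mk_left _ _, hψ₂ _ _ hadj (by simp)⟩
    · obtain ⟨y, rfl⟩ := Sym2.mem_iff_exists.1 hve
      have hadj : (hypercube (n + 1)).Adj v (Fin.cons (α := fun _ => Bool) (v 0) y) :=
        hypercube_succ_adj_iff.2 (Or.inl ⟨rfl, by rwa [Fin.tail_cons]⟩)
      exact ⟨_, hadj, Sym2.mem_mk_left _ _, (hψ₁ _ _ hadj rfl).trans (by rw [Fin.tail_cons])⟩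

theorem IsLayerLift.image_edgeSet (hψ : IsLayerLift cv ce ψ) :
    ψ '' (hypercube (n + 1)).edgeSet = range cv ∪ ce '' (hypercube n).edgeSet := by
  rw [← iUnion_edgePalette, ← iUnion_palette]
  simp only [hψ.edgePalette_eq]
  have htail : Function.Surjective (Fin.tail : (Fin (n + 1) → Bool) → Fin n → Bool) :=
    fun x => ⟨Fin.cons false x, Fin.tail_cons _ _⟩
  exact htail.iUnion_comp (palette (hypercube n) cv ce)

end Lift

theorem stmt9 (n t : ℕ) (cv : (Fin n → Bool) → ℕ) (ce : Sym2 (Fin n → Bool) → ℕ)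
    (hφ : IsIntervalTotalColoring (hypercube n) t cv ce)
    (ψ : Sym2 (Fin (n + 1) → Bool) → ℕ)
    (hψ₁ : ∀ u v : Fin (n + 1) → Bool, (hypercube (n + 1)).Adj u v → u 0 = v 0 →
      ψ s(u, v) = ce s(Fin.tail u, Fin.tail v))
    (hψ₂ : ∀ u v : Fin (n + 1) → Bool, (hypercube (n + 1)).Adj u v → u 0 ≠ v 0 →
      ψ s(u, v) = cv (Fin.tail u)) :
    IsIntervalEdgeColoring (hypercube (n + 1)) t ψ := by
  have hψ : IsLayerLift cv ce ψ := ⟨hψ₁, hψ₂⟩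
  obtain ⟨hφ, hcv, hce, hcover, hpalette⟩ := hφ
  have hcolors : range cv ∪ ce '' (hypercube n).edgeSet ⊆ Icc 1 t :=
    union_subset (range_subset_iff.2 hcv) (image_subset_iff.2 hce)
  have himage := hψ.image_edgeSet
  refine ⟨hψ.isProperEdgeColoring hφ, fun e he => ?_, fun c hc => ?_, fun v => ?_⟩
  · exact hcolors (himage ▸ mem_image_of_mem ψ he)
  · rw [← mem_image, himage]
    exact hcover c hc
  · obtain ⟨a, ha⟩ := hpalette (Fin.tail v)
    rw [deg_hypercube] at ha
    have ha_mem : a ∈ palette (hypercube n) cv ce (Fin.tail v) := ha ▸ left_mem_Icc.2 (by omega)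
    have ha_pos : 1 ≤ a := (hcolors (iUnion_palette _ _ _ ▸ mem_iUnion_of_mem _ ha_mem)).1
    refine ⟨a - 1, ?_⟩
    rw [hψ.edgePalette_eq, ha, deg_hypercube]
    congr 1 <;> omega

end ITC
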